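/- Let Φ_L(x) = e^{−6x}·e^{−2πe^{−x}}·Π_{n=1}^∞ (1 − e^{−2πn e^{−x}})^{24} for x ∈ ℝ. Then for every complex number z with |Im(z)| < 6, the function x ↦ Φ_L(x)·e^{izx} is integrable on ℝ, and the function ψ_L(z) = ∫_{−∞}^{∞} Φ_L(x) e^{izx} dx is holomorphic on the horizontal strip {z ∈ ℂ : |Im(z)| < 6}. -/

import Mathlib

/-!
Every factor of the product lies in `[0, 1]`, so `0 ≤ Φ_L(x) ≤ e^{-6x} e^{-2π e^{-x}}`, and since
`6s ≤ π e^s` this is at most both `e^{-6x}` and `e^{6x}`. Hence `Φ_L(x) e^{tx}` is integrable for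
every real `t ∈ (-6, 6)`. Regarding `Φ_L(x) dx` as a measure, `ψ_L(z)` is its complex moment
generating function at `iz`, which is holomorphic on the strip where the real exponential moments
are finite.
-/

open Real MeasureTheory

/-- The Fourier kernel of the completed Ramanujan L-function:
`Φ_L(x) = e^{−6x} e^{−2πe^{−x}} Π_{n=1}^∞ (1 − e^{−2πn e^{−x}})^{24}`. -/
noncomputable def RamanujanPhi (x : ℝ) : ℝ :=
  Real.exp (-6 * x) * Real.exp (-2 * π * Real.exp (-x))
    * ∏' n : ℕ, (1 - Real.exp (-2 * π * ((n : ℝ) + 1) * Real.exp (-x))) ^ 24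

open Set ProbabilityTheory

theorem tprod_le_one₀ {ι α : Type*} [CommMonoidWithZero α] [TopologicalSpace α] [Preorder α]
    [ZeroLEOneClass α] [PosMulMono α] [ClosedIicTopology α] {f : ι → α}
    (h0 : ∀ i, 0 ≤ f i) (h1 : ∀ i, f i ≤ 1) : ∏' i, f i ≤ 1 := by
  by_cases hf : Multipliable f
  · exact le_of_tendsto' hf.hasProd fun s => Finset.prod_le_one (fun i _ => h0 i) fun i _ => h1 i
  · rw [tprod_eq_one_of_not_multipliable hf]

section WithDensity

variable {α E : Type*} [MeasurableSpace α] {μ : Measure α} {φ : α → ℝ}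
  [NormedAddCommGroup E] [NormedSpace ℝ E]

theorem integrable_withDensity_ofReal_iff (hφ : AEMeasurable φ μ) (h0 : 0 ≤ᵐ[μ] φ) {g : α → E} :
    Integrable g (μ.withDensity fun x => ENNReal.ofReal (φ x)) ↔
      Integrable (fun x => φ x • g x) μ := by
  rw [integrable_withDensity_iff_integrable_smul₀' hφ.ennreal_ofReal
    (Filter.Eventually.of_forall fun _ => ENNReal.ofReal_lt_top)]
  refine integrable_congr ?_
  filter_upwards [h0] with x hx
  rw [ENNReal.toReal_ofReal hx]

theorem integral_withDensity_ofReal (hφ : AEMeasurable φ μ) (h0 : 0 ≤ᵐ[μ] φ) (g : α → E) :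
    ∫ x, g x ∂(μ.withDensity fun x => ENNReal.ofReal (φ x)) = ∫ x, φ x • g x ∂μ := by
  rw [integral_withDensity_eq_integral_toReal_smul₀ hφ.ennreal_ofReal
    (Filter.Eventually.of_forall fun _ => ENNReal.ofReal_lt_top)]
  refine integral_congr_ae ?_
  filter_upwards [h0] with x hx
  rw [ENNReal.toReal_ofReal hx]

end WithDensity

section TwoSidedLaplace

variable {μ : Measure ℝ} {φ : ℝ → ℝ} {a b : ℝ}

theorem Ioo_subset_interior_integrableExpSet_withDensity (hφ : AEMeasurable φ μ)
    (h0 : 0 ≤ᵐ[μ] φ) (hexp : ∀ t ∈ Ioo a b, Integrable (fun x => φ x * exp (t * x)) μ) :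
    Ioo a b ⊆ interior (integrableExpSet id (μ.withDensity fun x => ENNReal.ofReal (φ x))) :=
  interior_maximal (fun t ht => (integrable_withDensity_ofReal_iff hφ h0).2 (hexp t ht)) isOpen_Ioo

theorem integrable_ofReal_mul_cexp (hφ : AEMeasurable φ μ) (h0 : 0 ≤ᵐ[μ] φ)
    (hexp : ∀ t ∈ Ioo a b, Integrable (fun x => φ x * exp (t * x)) μ) {z : ℂ}
    (hz : z.re ∈ Ioo a b) :
    Integrable (fun x : ℝ => (φ x : ℂ) * Complex.exp (z * x)) μ := by
  simp_rw [← Complex.real_smul]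
  exact (integrable_withDensity_ofReal_iff hφ h0).1 <|
    integrable_cexp_mul_of_re_mem_interior_integrableExpSet
      (Ioo_subset_interior_integrableExpSet_withDensity hφ h0 hexp hz)

theorem differentiableOn_integral_ofReal_mul_cexp (hφ : AEMeasurable φ μ) (h0 : 0 ≤ᵐ[μ] φ)
    (hexp : ∀ t ∈ Ioo a b, Integrable (fun x => φ x * exp (t * x)) μ) :
    DifferentiableOn ℂ (fun z : ℂ => ∫ x, (φ x : ℂ) * Complex.exp (z * x) ∂μ)
      {z : ℂ | z.re ∈ Ioo a b} := by
  refine (differentiableOn_complexMGF.mono fun z hz =>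
    Ioo_subset_interior_integrableExpSet_withDensity hφ h0 hexp hz).congr fun z _ => ?_
  simp_rw [complexMGF, integral_withDensity_ofReal hφ h0, Complex.real_smul, id]

end TwoSidedLaplace

theorem integrable_mul_exp_of_le_exp {φ : ℝ → ℝ} {a b t : ℝ} (hφ : AEStronglyMeasurable φ)
    (h0 : ∀ x, 0 ≤ φ x) (ha : ∀ x, φ x ≤ exp (a * x)) (hb : ∀ x, φ x ≤ exp (b * x))
    (ht : t ∈ Ioo (-b) (-a)) :
    Integrable (fun x => φ x * exp (t * x)) := by
  have hmeas : AEStronglyMeasurable (fun x => φ x * exp (t * x)) := hφ.mul (by fun_prop)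
  have bound : ∀ c, (∀ x, φ x ≤ exp (c * x)) → ∀ x,
      ‖φ x * exp (t * x)‖ ≤ exp ((c + t) * x) := fun c hc x => by
    rw [Real.norm_of_nonneg (mul_nonneg (h0 x) (exp_pos _).le), add_mul, exp_add]
    exact mul_le_mul_of_nonneg_right (hc x) (exp_pos _).le
  rw [← integrableOn_univ, ← Iic_union_Ioi (a := 0)]
  refine IntegrableOn.union ?_ ?_
  · exact (integrableOn_exp_mul_Iic (by linarith [ht.1]) 0).mono' hmeas.restrict
      (ae_of_all _ (bound b hb))
  · exact (integrableOn_exp_mul_Ioi (by linarith [ht.2]) 0).mono' hmeas.restrict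
      (ae_of_all _ (bound a ha))

theorem six_mul_le_pi_mul_exp (s : ℝ) : 6 * s ≤ π * exp s := by
  rcases le_or_gt s 0 with hs | hs
  · nlinarith [exp_pos s, pi_pos]
  · nlinarith [quadratic_le_exp_of_nonneg hs.le, pi_gt_three, sq_nonneg (s - 1)]

theorem measurable_ramanujanPhi : Measurable RamanujanPhi := by
  unfold RamanujanPhi
  fun_prop

theorem ramanujanPhi_nonneg (x : ℝ) : 0 ≤ RamanujanPhi x :=
  mul_nonneg (by positivity) (tprod_nonneg fun _ => Even.pow_nonneg (by decide) _)

theorem ramanujanPhi_le (x : ℝ) : RamanujanPhi x ≤ exp (-6 * x) * exp (-2 * π * exp (-x)) := by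
  have hexp_le (n : ℕ) : exp (-2 * π * ((n : ℝ) + 1) * exp (-x)) ≤ 1 :=
    exp_le_one_iff.2 (by simp only [neg_mul, neg_nonpos]; positivity)
  refine mul_le_of_le_one_right (by positivity) (tprod_le_one₀ (fun n => ?_) fun n => ?_)
  · exact pow_nonneg (sub_nonneg.2 (hexp_le n)) _
  · exact pow_le_one₀ (sub_nonneg.2 (hexp_le n)) (sub_le_self _ (exp_pos _).le)

theorem ramanujanPhi_le_exp_neg (x : ℝ) : RamanujanPhi x ≤ exp (-6 * x) :=
  (ramanujanPhi_le x).trans <| mul_le_of_le_one_right (exp_pos _).le <|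
    exp_le_one_iff.2 (by simp only [neg_mul, neg_nonpos]; positivity)

theorem ramanujanPhi_le_exp (x : ℝ) : RamanujanPhi x ≤ exp (6 * x) := by
  refine (ramanujanPhi_le x).trans ?_
  rw [← exp_add, exp_le_exp]
  linarith [six_mul_le_pi_mul_exp (-x)]

theorem integrable_ramanujanPhi_mul_exp {t : ℝ} (ht : t ∈ Ioo (-6) 6) :
    Integrable fun x => RamanujanPhi x * exp (t * x) :=
  integrable_mul_exp_of_le_exp measurable_ramanujanPhi.aestronglyMeasurable ramanujanPhi_nonneg
    ramanujanPhi_le_exp_neg ramanujanPhi_le_exp (by simpa using ht)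

theorem ramanujan_psi_integrable_holomorphic_on_strip :
    (∀ z : ℂ, |z.im| < 6 → Integrable (fun x : ℝ =>
      (RamanujanPhi x : ℂ) * Complex.exp (Complex.I * z * x))) ∧
    DifferentiableOn ℂ
      (fun z : ℂ => ∫ x : ℝ, (RamanujanPhi x : ℂ) * Complex.exp (Complex.I * z * x))
      {z : ℂ | |z.im| < 6} := by
  have hφ := measurable_ramanujanPhi.aemeasurable (μ := volume)
  have h0 : 0 ≤ᵐ[volume] RamanujanPhi := ae_of_all _ ramanujanPhi_nonneg
  have hexp : ∀ t ∈ Ioo (-6 : ℝ) 6, Integrable fun x => RamanujanPhi x * exp (t * x) :=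
    fun _ => integrable_ramanujanPhi_mul_exp
  have hstrip (z : ℂ) (hz : |z.im| < 6) : (Complex.I * z).re ∈ Ioo (-6 : ℝ) 6 := by
    obtain ⟨hlow, hup⟩ := abs_lt.1 hz
    rw [Complex.I_mul_re]
    constructor <;> linarith
  refine ⟨fun z hz => integrable_ofReal_mul_cexp hφ h0 hexp (hstrip z hz), ?_⟩
  exact (differentiableOn_integral_ofReal_mul_cexp hφ h0 hexp).comp
    (differentiable_id.const_mul Complex.I).differentiableOn hstrip
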